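/- arXiv:1403.0158 — 5 statements merged into one kernel-verified Lean document; each statement's English description precedes it below -/
import Mathlib

section
/- For every α ≥ 0, the closed ball {z ∈ X : ‖z‖ ≤ α} (with respect to the Hilbert norm of X) is closed in the τ-topology; equivalently, if (u_n) ⊂ X satisfies ‖u_n‖ ≤ α for all n and ‖u_n − u‖_τ → 0, then ‖u‖ ≤ α. -/
open Filter Topology RealInnerProductSpace

noncomputable section

variable {X : Type*} [NormedAddCommGroup X] [InnerProductSpace ℝ X]

/-- Weak sequential convergence in a real inner product space. -/
def WeakSeqConv (u : ℕ → X) (l : X) : Prop :=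
  ∀ v : X, Tendsto (fun n => ⟪u n, v⟫) atTop (𝓝 ⟪l, v⟫)

/-- `Pm`, `Pp` are the orthogonal projections associated to the
orthogonal decomposition `X = Xm ⊕ Xmᗮ` (`Xm` closed). -/
structure OrthDecomp (Xm : Submodule ℝ X) (Pm Pp : X →L[ℝ] X) : Prop where
  closed : IsClosed (Xm : Set X)
  mem_m : ∀ u : X, Pm u ∈ Xm
  mem_p : ∀ u : X, Pp u ∈ Xmᗮ
  sum : ∀ u : X, Pm u + Pp u = u

/-- `a` is an orthonormal (Hilbert) basis of the subspace `Y`. -/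
structure IsONBasisOf (a : ℕ → X) (Y : Submodule ℝ X) : Prop where
  ortho : Orthonormal ℝ a
  mem : ∀ j : ℕ, a j ∈ Y
  dense : (Submodule.span ℝ (Set.range a)).topologicalClosure = Y

/-- Condition (KS): `Φ u = ½‖P⁺u‖² − ½‖P⁻u‖² − Ψ u` where `Ψ` is `C¹`, bounded
below, weakly sequentially lower semicontinuous, and `Ψ'` is weakly
sequentially continuous. -/
structure IsKS (Pm Pp : X →L[ℝ] X) (Φ Ψ : X → ℝ) : Prop where
  smooth : ContDiff ℝ 1 Ψ
  bddBelow : BddBelow (Set.range Ψ)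
  wslsc : ∀ (u : ℕ → X) (l : X), WeakSeqConv u l →
    Ψ l ≤ liminf (fun n => Ψ (u n)) atTop
  deriv_wsc : ∀ (u : ℕ → X) (l : X), WeakSeqConv u l → ∀ v : X,
    Tendsto (fun n => fderiv ℝ Ψ (u n) v) atTop (𝓝 (fderiv ℝ Ψ l v))
  eq : ∀ u : X, Φ u = 1 / 2 * ‖Pp u‖ ^ 2 - 1 / 2 * ‖Pm u‖ ^ 2 - Ψ u

/-- The τ-norm associated to the projections and to an orthonormal basis `a`
of `X⁻`: `‖u‖_τ = max( Σ_j 2^{-(j+1)} |⟨P⁻u, a_j⟩| , ‖P⁺u‖ )`. -/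
def tauNorm (Pm Pp : X →L[ℝ] X) (a : ℕ → X) (u : X) : ℝ :=
  max (∑' j : ℕ, (1 : ℝ) / 2 ^ (j + 1) * |⟪Pm u, a j⟫|) ‖Pp u‖

/-- The Cerami condition at level `c`. -/
def CeramiCond (Φ : X → ℝ) (c : ℝ) : Prop :=
  ∀ u : ℕ → X, Tendsto (fun n => Φ (u n)) atTop (𝓝 c) →
    Tendsto (fun n => (1 + ‖u n‖) * ‖fderiv ℝ Φ (u n)‖) atTop (𝓝 0) →
    ∃ (v : X) (φ : ℕ → ℕ), StrictMono φ ∧ Tendsto (fun n => u (φ n)) atTop (𝓝 v)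

/-- `X_k⁻ = X⁻ ⊕ span{e₀, …, e_k}`. -/
def negSpace (Xm : Submodule ℝ X) (e : ℕ → X) (k : ℕ) : Submodule ℝ X :=
  Xm ⊔ Submodule.span ℝ {x : X | ∃ j ≤ k, x = e j}

/-- `X_k⁺ = closure of span{e_j : j ≥ k}`. -/
def posSpace (e : ℕ → X) (k : ℕ) : Submodule ℝ X :=
  (Submodule.span ℝ {x : X | ∃ j ≥ k, x = e j}).topologicalClosure

/-- Closed balls (for the Hilbert norm) are τ-closed: if `‖u_n‖ ≤ α` for all
`n` and `‖u_n − u‖_τ → 0`, then `‖u‖ ≤ α`. -/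
theorem ball_tau_closed
    [CompleteSpace X] [TopologicalSpace.SeparableSpace X]
    (Xm : Submodule ℝ X) (Pm Pp : X →L[ℝ] X) (hdec : OrthDecomp Xm Pm Pp)
    (a : ℕ → X) (ha : IsONBasisOf a Xm)
    (α : ℝ) (hα : 0 ≤ α) (u : ℕ → X) (l : X)
    (hn : ∀ n : ℕ, ‖u n‖ ≤ α)
    (htau : Tendsto (fun n => tauNorm Pm Pp a (u n - l)) atTop (𝓝 0)) :
    ‖l‖ ≤ α := by
  set w : ℕ → X := fun n => Pm (u n - l) with hw
  set M : ℝ := ‖Pm‖ * (α + ‖l‖) with hM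
  have hM0 : 0 ≤ M := by positivity
  have hwb : ∀ n, ‖w n‖ ≤ M := by
    intro n
    calc ‖w n‖ ≤ ‖Pm‖ * ‖u n - l‖ := Pm.le_opNorm _
      _ ≤ ‖Pm‖ * (α + ‖l‖) := by
          apply mul_le_mul_of_nonneg_left _ (norm_nonneg _)
          calc ‖u n - l‖ ≤ ‖u n‖ + ‖l‖ := norm_sub_le _ _
            _ ≤ α + ‖l‖ := by linarith [hn n]
  -- the two components of the tau norm tend to zero
  have hSnonneg : ∀ n, 0 ≤ ∑' j : ℕ, (1 : ℝ) / 2 ^ (j + 1) * |⟪w n, a j⟫| := by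
    intro n; exact tsum_nonneg fun j => by positivity
  have hPp : Tendsto (fun n => ‖Pp (u n - l)‖) atTop (𝓝 0) :=
    squeeze_zero (fun n => norm_nonneg _) (fun n => le_max_right _ _) htau
  have hS : Tendsto (fun n => ∑' j : ℕ, (1 : ℝ) / 2 ^ (j + 1) * |⟪w n, a j⟫|)
      atTop (𝓝 0) :=
    squeeze_zero hSnonneg (fun n => le_max_left _ _) htau
  -- summability of the series
  have hsum : ∀ n, Summable (fun j : ℕ => (1 : ℝ) / 2 ^ (j + 1) * |⟪w n, a j⟫|) := by
    intro n
    have hgeo : Summable (fun j : ℕ => (1 : ℝ) / 2 ^ (j + 1) * ‖w n‖) := by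
      have h2 : Summable (fun j : ℕ => ((1 : ℝ) / 2) ^ j * ((1 / 2) * ‖w n‖)) :=
        summable_geometric_two.mul_right _
      refine h2.congr fun j => ?_
      rw [div_pow, one_pow, pow_succ]
      ring
    refine Summable.of_nonneg_of_le (fun j => by positivity) (fun j => ?_) hgeo
    have := abs_real_inner_le_norm (w n) (a j)
    rw [ha.ortho.1 j, mul_one] at this
    have h0 : (0:ℝ) ≤ (1 : ℝ) / 2 ^ (j + 1) := by positivity
    exact mul_le_mul_of_nonneg_left this h0
  -- each coordinate tends to zero
  have hcoord : ∀ j : ℕ, Tendsto (fun n => ⟪w n, a j⟫) atTop (𝓝 0) := by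
    intro j
    refine squeeze_zero_norm (a := fun n => 2 ^ (j + 1) *
      ∑' i : ℕ, (1 : ℝ) / 2 ^ (i + 1) * |⟪w n, a i⟫|) ?_ ?_
    · intro n
      have hle : (1 : ℝ) / 2 ^ (j + 1) * |⟪w n, a j⟫| ≤
          ∑' i : ℕ, (1 : ℝ) / 2 ^ (i + 1) * |⟪w n, a i⟫| :=
        Summable.le_tsum (hsum n) j fun i _ => by positivity
      rw [Real.norm_eq_abs]
      calc |⟪w n, a j⟫| = 2 ^ (j + 1) * ((1 : ℝ) / 2 ^ (j + 1) * |⟪w n, a j⟫|) := by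
            field_simp
        _ ≤ _ := by
            apply mul_le_mul_of_nonneg_left hle (by positivity)
    · simpa using hS.const_mul ((2:ℝ) ^ (j + 1))
  -- convergence against elements of the span
  have hspan : ∀ v ∈ Submodule.span ℝ (Set.range a),
      Tendsto (fun n => ⟪w n, v⟫) atTop (𝓝 0) := by
    intro v hv
    induction hv using Submodule.span_induction with
    | mem x hx =>
        obtain ⟨j, rfl⟩ := hx
        exact hcoord j
    | zero => simp
    | add x y hx hy ihx ihy =>
        simpa [inner_add_right] using ihx.add ihy
    | smul c x hx ihx =>
        simpa [real_inner_smul_right] using ihx.const_mul c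
  -- convergence against elements of the closure of the span
  have hclos : ∀ v ∈ closure ((Submodule.span ℝ (Set.range a) : Set X)),
      Tendsto (fun n => ⟪w n, v⟫) atTop (𝓝 0) := by
    intro v hv
    rw [Metric.tendsto_atTop]
    intro ε hε
    have hε' : 0 < ε / (2 * (M + 1)) := by positivity
    obtain ⟨v', hv'mem, hv'close⟩ := Metric.mem_closure_iff.1 hv _ hε'
    have hv't := hspan v' hv'mem
    rw [Metric.tendsto_atTop] at hv't
    obtain ⟨N, hN⟩ := hv't (ε / 2) (by positivity)
    refine ⟨N, fun n hn' => ?_⟩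
    have h1 := hN n hn'
    rw [Real.dist_eq, sub_zero] at h1 ⊢
    have h2 : |⟪w n, v - v'⟫| ≤ M * (ε / (2 * (M + 1))) := by
      calc |⟪w n, v - v'⟫| ≤ ‖w n‖ * ‖v - v'‖ := abs_real_inner_le_norm _ _
        _ ≤ M * (ε / (2 * (M + 1))) := by
            apply mul_le_mul (hwb n) _ (norm_nonneg _) hM0
            rw [← dist_eq_norm]
            exact le_of_lt hv'close
    have h3 : M * (ε / (2 * (M + 1))) < ε / 2 := by
      have hM1 : (0:ℝ) < M + 1 := by linarith
      calc M * (ε / (2 * (M + 1))) < (M + 1) * (ε / (2 * (M + 1))) := by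
            apply mul_lt_mul_of_pos_right (by linarith) (by positivity)
        _ = ε / 2 := by field_simp
    have h4 : ⟪w n, v⟫ = ⟪w n, v'⟫ + ⟪w n, v - v'⟫ := by
      rw [inner_sub_right]; ring
    calc |⟪w n, v⟫| ≤ |⟪w n, v'⟫| + |⟪w n, v - v'⟫| := by
          rw [h4]; exact abs_add_le _ _
      _ < ε / 2 + ε / 2 := by
          apply add_lt_add_of_lt_of_le h1 (le_of_lt (lt_of_le_of_lt h2 h3))
      _ = ε := by ring
  -- Pm l is in the closure of the span
  have hPml_mem : Pm l ∈ closure ((Submodule.span ℝ (Set.range a) : Set X)) := by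
    have := hdec.mem_m l
    rw [← ha.dense] at this
    exact this
  have hPml : Tendsto (fun n => ⟪w n, Pm l⟫) atTop (𝓝 0) := hclos _ hPml_mem
  -- decompose the inner product
  have hinner : ∀ n, ⟪u n - l, l⟫ = ⟪w n, Pm l⟫ + ⟪Pp (u n - l), l⟫ := by
    intro n
    have h1 : u n - l = w n + Pp (u n - l) := (hdec.sum _).symm
    have h2 : ⟪w n, Pp l⟫ = 0 :=
      (Submodule.mem_orthogonal Xm (Pp l)).1 (hdec.mem_p l) (w n) (hdec.mem_m _)
    conv_lhs => rw [h1]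
    rw [inner_add_left]
    congr 1
    conv_lhs => rw [← hdec.sum l]
    rw [inner_add_right, h2, add_zero]
  have hPpterm : Tendsto (fun n => ⟪Pp (u n - l), l⟫) atTop (𝓝 0) := by
    refine squeeze_zero_norm (a := fun n => ‖Pp (u n - l)‖ * ‖l‖)
      (fun n => norm_inner_le_norm _ _) ?_
    simpa using hPp.mul_const ‖l‖
  have htend : Tendsto (fun n => ⟪u n - l, l⟫) atTop (𝓝 0) := by
    have := hPml.add hPpterm
    rw [add_zero] at this
    exact this.congr fun n => (hinner n).symm
  have hfin : Tendsto (fun n => ⟪u n, l⟫) atTop (𝓝 (⟪l, l⟫ : ℝ)) := by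
    have := htend.add_const (⟪l, l⟫ : ℝ)
    rw [zero_add] at this
    refine this.congr fun n => ?_
    rw [inner_sub_left]; ring
  have hbound : ∀ n, ⟪u n, l⟫ ≤ α * ‖l‖ := by
    intro n
    calc ⟪u n, l⟫ ≤ ‖u n‖ * ‖l‖ := real_inner_le_norm _ _
      _ ≤ α * ‖l‖ := mul_le_mul_of_nonneg_right (hn n) (norm_nonneg _)
  have hsq : (⟪l, l⟫ : ℝ) ≤ α * ‖l‖ :=
    le_of_tendsto hfin (Filter.Eventually.of_forall hbound)
  rw [real_inner_self_eq_norm_sq] at hsq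
  nlinarith [norm_nonneg l, hsq]
end
end

section
/- Assume Φ : X → ℝ satisfies condition (KS). Then Φ is τ-upper semicontinuous: for every a ∈ ℝ, the sublevel set {u ∈ X : Φ(u) < a} is open in the τ-topology (equivalently, every superlevel set {u ∈ X : Φ(u) ≥ a} is τ-closed). -/
open Filter Topology RealInnerProductSpace

noncomputable section

variable {X : Type*} [NormedAddCommGroup X] [InnerProductSpace ℝ X]

lemma tau_summable (Pm : X →L[ℝ] X) (a : ℕ → X) (w : X) (hna : ∀ j, ‖a j‖ = 1) :
    Summable (fun j : ℕ => (1 : ℝ) / 2 ^ (j + 1) * |⟪Pm w, a j⟫|) := by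
  refine Summable.of_nonneg_of_le (fun j => by positivity) (fun j => ?_)
    (summable_geometric_two.mul_left ‖Pm w‖)
  have h1 : |⟪Pm w, a j⟫| ≤ ‖Pm w‖ := by
    simpa [hna j] using abs_real_inner_le_norm (Pm w) (a j)
  have h2 : ((1 : ℝ) / 2 ^ (j + 1)) ≤ (1 / 2 : ℝ) ^ j := by
    rw [show ((1:ℝ)/2^(j+1)) = (1/2:ℝ)^(j+1) by rw [div_pow, one_pow]]
    exact pow_le_pow_of_le_one (by norm_num) (by norm_num) (Nat.le_succ j)
  calc (1 : ℝ) / 2 ^ (j + 1) * |⟪Pm w, a j⟫| ≤ (1/2:ℝ)^j * ‖Pm w‖ :=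
        mul_le_mul h2 h1 (abs_nonneg _) (by positivity)
    _ = ‖Pm w‖ * (1/2:ℝ)^j := mul_comm _ _

/-- If `Φ` satisfies (KS), then `Φ` is τ-upper semicontinuous: every strict
sublevel set `{Φ < c}` is open in the topology generated by the τ-norm. -/
theorem tau_upper_semicontinuous
    [CompleteSpace X] [TopologicalSpace.SeparableSpace X]
    (Xm : Submodule ℝ X) (Pm Pp : X →L[ℝ] X) (hdec : OrthDecomp Xm Pm Pp)
    (a : ℕ → X) (ha : IsONBasisOf a Xm)
    (Φ Ψ : X → ℝ) (hKS : IsKS Pm Pp Φ Ψ) :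
    ∀ (c : ℝ) (u : X), Φ u < c →
      ∃ δ > 0, ∀ v : X, tauNorm Pm Pp a (v - u) < δ → Φ v < c := by
  intro c u hu
  by_contra hcon
  push_neg at hcon
  have hpos : ∀ n : ℕ, (0:ℝ) < 1 / (n + 1) := fun n => by positivity
  choose v hτ hc using fun n : ℕ => hcon (1 / ((n : ℝ) + 1)) (hpos n)
  obtain ⟨m, hm⟩ := hKS.bddBelow
  have hmΨ : ∀ x, m ≤ Ψ x := fun x => hm ⟨x, rfl⟩
  have hna : ∀ j, ‖a j‖ = 1 := fun j => ha.ortho.1 j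
  -- norm estimate for the positive parts
  have hPpτ : ∀ n, ‖Pp (v n) - Pp u‖ < 1 / (n + 1) := by
    intro n
    refine lt_of_le_of_lt ?_ (hτ n)
    rw [← map_sub]
    exact le_max_right _ _
  -- coefficient estimates for the negative parts
  have hcoef : ∀ n j, |⟪Pm (v n) - Pm u, a j⟫| ≤ 2 ^ (j+1) * (1 / (n + 1)) := by
    intro n j
    have hs := tau_summable Pm a (v n - u) hna
    have h1 : (1:ℝ) / 2 ^ (j+1) * |⟪Pm (v n - u), a j⟫| ≤ tauNorm Pm Pp a (v n - u) :=
      le_trans (Summable.le_tsum hs j (fun i _ => by positivity)) (le_max_left _ _)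
    rw [map_sub] at h1
    have h2 : (0:ℝ) < 2 ^ (j+1) := by positivity
    calc |⟪Pm (v n) - Pm u, a j⟫|
        = 2 ^ (j+1) * ((1:ℝ) / 2 ^ (j+1) * |⟪Pm (v n) - Pm u, a j⟫|) := by
          field_simp
      _ ≤ 2 ^ (j+1) * (1 / (n + 1)) :=
          mul_le_mul_of_nonneg_left (le_of_lt (lt_of_le_of_lt h1 (hτ n))) h2.le
  -- bound for ‖Pp (v n)‖
  have hPpb : ∀ n, ‖Pp (v n)‖ ≤ ‖Pp u‖ + 1 := by
    intro n
    have h1 : ‖Pp (v n) - Pp u‖ ≤ 1 := by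
      refine le_trans (hPpτ n).le ?_
      rw [div_le_one (by positivity)]
      have : (0:ℝ) ≤ (n:ℝ) := Nat.cast_nonneg n
      linarith
    have h2 := norm_add_le (Pp (v n) - Pp u) (Pp u)
    rw [sub_add_cancel] at h2
    linarith
  -- the energy inequality
  have hΦn : ∀ n, c ≤ 1/2 * ‖Pp (v n)‖^2 - 1/2 * ‖Pm (v n)‖^2 - Ψ (v n) := by
    intro n
    have := hc n
    rwa [hKS.eq (v n)] at this
  -- bound for ‖Pm (v n)‖
  have hPmsq : ∀ n, ‖Pm (v n)‖^2 ≤ (‖Pp u‖ + 1)^2 - 2*m - 2*c := by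
    intro n
    have h1 := hΦn n
    have h2 := hmΨ (v n)
    have h3 := hPpb n
    nlinarith [norm_nonneg (Pp (v n)), norm_nonneg (Pp u)]
  set K : ℝ := (‖Pp u‖ + 1)^2 - 2*m - 2*c with hKdef
  set D : ℝ := Real.sqrt K + ‖Pm u‖ with hDdef
  have hD0 : 0 ≤ D := add_nonneg (Real.sqrt_nonneg _) (norm_nonneg _)
  have hdb : ∀ n, ‖Pm (v n) - Pm u‖ ≤ D := by
    intro n
    have h1 : ‖Pm (v n)‖ ≤ Real.sqrt K := by
      rw [← Real.sqrt_sq (norm_nonneg (Pm (v n)))]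
      exact Real.sqrt_le_sqrt (hPmsq n)
    calc ‖Pm (v n) - Pm u‖ ≤ ‖Pm (v n)‖ + ‖Pm u‖ := norm_sub_le _ _
      _ ≤ D := by rw [hDdef]; linarith
  -- convergence of coefficients on the span
  have key0 : ∀ x ∈ Submodule.span ℝ (Set.range a),
      Tendsto (fun n => ⟪Pm (v n) - Pm u, x⟫) atTop (𝓝 0) := by
    intro x hx
    induction hx using Submodule.span_induction with
    | mem x hx =>
      obtain ⟨j, rfl⟩ := hx
      refine squeeze_zero_norm (fun n => by
        simpa [Real.norm_eq_abs] using hcoef n j) ?_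
      simpa using tendsto_one_div_add_atTop_nhds_zero_nat.const_mul ((2:ℝ)^(j+1))
    | zero => simp only [inner_zero_right]; exact tendsto_const_nhds
    | add x y hx hy ihx ihy => simpa [inner_add_right] using ihx.add ihy
    | smul r x hx ih => simpa [real_inner_smul_right] using ih.const_mul r
  -- convergence of coefficients on all of Xm
  have key : ∀ x ∈ Xm, Tendsto (fun n => ⟪Pm (v n) - Pm u, x⟫) atTop (𝓝 0) := by
    intro x hx
    rw [← ha.dense] at hx
    have hx' : x ∈ closure ((Submodule.span ℝ (Set.range a) : Submodule ℝ X) : Set X) := by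
      rw [← Submodule.topologicalClosure_coe]
      exact hx
    rw [Metric.tendsto_atTop]
    intro ε hε
    obtain ⟨y, hy, hxy⟩ := Metric.mem_closure_iff.mp hx' (ε / (2 * (D + 1))) (by positivity)
    obtain ⟨N, hN⟩ := Metric.tendsto_atTop.mp (key0 y hy) (ε / 2) (by positivity)
    refine ⟨N, fun n hn => ?_⟩
    have h1 := hN n hn
    rw [Real.dist_eq, sub_zero] at h1 ⊢
    have h2 : ⟪Pm (v n) - Pm u, x⟫ = ⟪Pm (v n) - Pm u, y⟫ + ⟪Pm (v n) - Pm u, x - y⟫ := by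
      rw [← inner_add_right]
      congr 1
      abel
    have h3 : |⟪Pm (v n) - Pm u, x - y⟫| ≤ D * ‖x - y‖ :=
      le_trans (abs_real_inner_le_norm _ _)
        (mul_le_mul_of_nonneg_right (hdb n) (norm_nonneg _))
    have h4 : ‖x - y‖ < ε / (2 * (D + 1)) := by rw [← dist_eq_norm]; exact hxy
    have hD1 : (0:ℝ) < D + 1 := by linarith
    have h5 : D * ‖x - y‖ < ε / 2 := by
      have t1 : D * ‖x - y‖ ≤ D * (ε / (2 * (D + 1))) :=
        mul_le_mul_of_nonneg_left h4.le hD0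
      have t2 : D * (ε / (2 * (D + 1))) < (D + 1) * (ε / (2 * (D + 1))) :=
        mul_lt_mul_of_pos_right (lt_add_one D) (by positivity)
      have t3 : (D + 1) * (ε / (2 * (D + 1))) = ε / 2 := by
        field_simp
      linarith
    calc |⟪Pm (v n) - Pm u, x⟫| = |⟪Pm (v n) - Pm u, y⟫ + ⟪Pm (v n) - Pm u, x - y⟫| := by
          rw [h2]
      _ ≤ |⟪Pm (v n) - Pm u, y⟫| + |⟪Pm (v n) - Pm u, x - y⟫| := abs_add_le _ _
      _ < ε / 2 + ε / 2 := add_lt_add_of_lt_of_le h1 (h3.trans h5.le)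
      _ = ε := by ring
  -- weak convergence of (v n) to u
  have hweak : WeakSeqConv v u := by
    intro w
    rw [← tendsto_sub_nhds_zero_iff]
    have h1 : ∀ n, ⟪v n, w⟫ - ⟪u, w⟫ =
        ⟪Pm (v n) - Pm u, Pm w⟫ + ⟪Pp (v n) - Pp u, w⟫ := by
      intro n
      have e1 : v n - u = (Pm (v n) - Pm u) + (Pp (v n) - Pp u) := by
        calc v n - u = (Pm (v n) + Pp (v n)) - (Pm u + Pp u) := by
              rw [hdec.sum, hdec.sum]
          _ = (Pm (v n) - Pm u) + (Pp (v n) - Pp u) := by abel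
      have hd : Pm (v n) - Pm u ∈ Xm := Submodule.sub_mem _ (hdec.mem_m _) (hdec.mem_m _)
      have e2 : ⟪Pm (v n) - Pm u, Pp w⟫ = 0 :=
        (Submodule.mem_orthogonal Xm (Pp w)).mp (hdec.mem_p w) _ hd
      have e3 : ⟪Pm (v n) - Pm u, w⟫ = ⟪Pm (v n) - Pm u, Pm w⟫ := by
        conv_lhs => rw [← hdec.sum w]
        rw [inner_add_right, e2, add_zero]
      rw [← inner_sub_left, e1, inner_add_left, e3]
    rw [show (fun n => ⟪v n, w⟫ - ⟪u, w⟫) =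
        fun n => ⟪Pm (v n) - Pm u, Pm w⟫ + ⟪Pp (v n) - Pp u, w⟫ from funext h1]
    have t1 := key (Pm w) (hdec.mem_m w)
    have t2 : Tendsto (fun n => ⟪Pp (v n) - Pp u, w⟫) atTop (𝓝 0) := by
      have hg : Tendsto (fun n : ℕ => 1 / ((n : ℝ) + 1) * ‖w‖) atTop (𝓝 0) := by
        simpa using tendsto_one_div_add_atTop_nhds_zero_nat.mul_const ‖w‖
      refine squeeze_zero_norm (fun n => ?_) hg
      calc ‖⟪Pp (v n) - Pp u, w⟫‖ ≤ ‖Pp (v n) - Pp u‖ * ‖w‖ := by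
            simpa [Real.norm_eq_abs] using abs_real_inner_le_norm (Pp (v n) - Pp u) w
        _ ≤ 1 / ((n : ℝ) + 1) * ‖w‖ :=
            mul_le_mul_of_nonneg_right (hPpτ n).le (norm_nonneg _)
    simpa using t1.add t2
  -- the liminf inequality for Ψ
  have hliminf := hKS.wslsc v u hweak
  set ε : ℝ := (c - Φ u) / 4 with hεdef
  have hε : 0 < ε := by rw [hεdef]; linarith
  have hbdd : IsBoundedUnder (· ≥ ·) atTop (fun n => Ψ (v n)) :=
    Filter.isBoundedUnder_of ⟨m, fun n => hmΨ (v n)⟩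
  have E1 : ∀ᶠ n in atTop, Ψ u - ε < Ψ (v n) :=
    Filter.eventually_lt_of_lt_liminf (lt_of_lt_of_le (by linarith) hliminf) hbdd
  have hlim1 : Tendsto (fun n => ⟪Pm (v n), Pm u⟫) atTop (𝓝 (‖Pm u‖^2)) := by
    have t := key (Pm u) (hdec.mem_m u)
    rw [← tendsto_sub_nhds_zero_iff]
    simpa [inner_sub_left, real_inner_self_eq_norm_sq] using t
  have E2 : ∀ᶠ n in atTop, ‖Pm u‖^2 - ε < ⟪Pm (v n), Pm u⟫ :=
    hlim1.eventually (eventually_gt_nhds (by linarith))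
  have hPpconv : Tendsto (fun n => Pp (v n)) atTop (𝓝 (Pp u)) := by
    rw [tendsto_iff_dist_tendsto_zero]
    refine squeeze_zero (fun n => dist_nonneg) (fun n => ?_)
      tendsto_one_div_add_atTop_nhds_zero_nat
    rw [dist_eq_norm]
    exact (hPpτ n).le
  have hlim2 : Tendsto (fun n => ‖Pp (v n)‖^2) atTop (𝓝 (‖Pp u‖^2)) :=
    hPpconv.norm.pow 2
  have E3 : ∀ᶠ n in atTop, ‖Pp (v n)‖^2 < ‖Pp u‖^2 + ε :=
    hlim2.eventually (eventually_lt_nhds (by linarith))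
  obtain ⟨n, h1, h2, h3⟩ := (E1.and (E2.and E3)).exists
  have h4 := hΦn n
  have h5 : ⟪Pm (v n), Pm u⟫ ≤ ‖Pm (v n)‖ * ‖Pm u‖ := real_inner_le_norm _ _
  have h6 := sq_nonneg (‖Pm (v n)‖ - ‖Pm u‖)
  have h7 : Φ u = 1/2 * ‖Pp u‖^2 - 1/2 * ‖Pm u‖^2 - Ψ u := hKS.eq u
  have h8 : 1/2 * ‖Pm u‖^2 - ε < 1/2 * ‖Pm (v n)‖^2 := by nlinarith
  have hε4 : ε = (c - Φ u) / 4 := hεdef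
  linarith
end
end

section
/- Assume Φ : X → ℝ satisfies condition (KS), let α ≤ β be real numbers, and let w ∈ X. Then the map v ↦ Φ'(v)w is sequentially τ-continuous on Φ_α^β := {u ∈ X : α ≤ Φ(u) ≤ β}: whenever (v_n) ⊂ Φ_α^β, v ∈ Φ_α^β, and ‖v_n − v‖_τ → 0, one has Φ'(v_n)w → Φ'(v)w. -/
open Filter Topology RealInnerProductSpace

noncomputable section

variable {X : Type*} [NormedAddCommGroup X] [InnerProductSpace ℝ X]

/-- Auxiliary: `⟪Pm u, x⟫ = ⟪Pm u, Pm x⟫`. -/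
lemma OrthDecomp.inner_Pm_Pm {Xm : Submodule ℝ X} {Pm Pp : X →L[ℝ] X}
    (h : OrthDecomp Xm Pm Pp) (u x : X) : ⟪Pm u, x⟫ = ⟪Pm u, Pm x⟫ := by
  have h1 : ⟪Pm u, Pp x⟫ = 0 :=
    (Submodule.mem_orthogonal Xm (Pp x)).1 (h.mem_p x) _ (h.mem_m u)
  calc ⟪Pm u, x⟫ = ⟪Pm u, Pm x + Pp x⟫ := by rw [h.sum]
    _ = ⟪Pm u, Pm x⟫ := by rw [inner_add_right, h1, add_zero]

/-- Auxiliary: `⟪Pp u, x⟫ = ⟪Pp u, Pp x⟫`. -/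
lemma OrthDecomp.inner_Pp_Pp {Xm : Submodule ℝ X} {Pm Pp : X →L[ℝ] X}
    (h : OrthDecomp Xm Pm Pp) (u x : X) : ⟪Pp u, x⟫ = ⟪Pp u, Pp x⟫ := by
  have h1 : ⟪Pp u, Pm x⟫ = 0 := by
    rw [real_inner_comm]
    exact (Submodule.mem_orthogonal Xm (Pp u)).1 (h.mem_p u) _ (h.mem_m x)
  calc ⟪Pp u, x⟫ = ⟪Pp u, Pm x + Pp x⟫ := by rw [h.sum]
    _ = ⟪Pp u, Pp x⟫ := by rw [inner_add_right, h1, zero_add]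

/-- The value of the Fréchet derivative of a (KS) functional. -/
lemma IsKS.fderiv_apply {Pm Pp : X →L[ℝ] X} {Φ Ψ : X → ℝ}
    (hKS : IsKS Pm Pp Φ Ψ) (u w : X) :
    fderiv ℝ Φ u w = ⟪Pp u, Pp w⟫ - ⟪Pm u, Pm w⟫ - fderiv ℝ Ψ u w := by
  have hΦ : Φ = fun u => 1 / 2 * ⟪Pp u, Pp u⟫ - 1 / 2 * ⟪Pm u, Pm u⟫ - Ψ u := by
    funext u
    rw [hKS.eq u, real_inner_self_eq_norm_sq, real_inner_self_eq_norm_sq]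
  have hp : HasFDerivAt (fun u : X => ⟪Pp u, Pp u⟫)
      ((fderivInnerCLM ℝ (Pp u, Pp u)).comp (Pp.prod Pp)) u :=
    (Pp.hasFDerivAt).inner ℝ (Pp.hasFDerivAt)
  have hm : HasFDerivAt (fun u : X => ⟪Pm u, Pm u⟫)
      ((fderivInnerCLM ℝ (Pm u, Pm u)).comp (Pm.prod Pm)) u :=
    (Pm.hasFDerivAt).inner ℝ (Pm.hasFDerivAt)
  have hΨ : HasFDerivAt Ψ (fderiv ℝ Ψ u) u :=
    (hKS.smooth.differentiable one_ne_zero u).hasFDerivAt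
  have H : HasFDerivAt Φ
      (((1 / 2 : ℝ) • (fderivInnerCLM ℝ (Pp u, Pp u)).comp (Pp.prod Pp) -
        (1 / 2 : ℝ) • (fderivInnerCLM ℝ (Pm u, Pm u)).comp (Pm.prod Pm)) -
        fderiv ℝ Ψ u) u := by
    rw [hΦ]
    exact ((hp.const_mul (1 / 2 : ℝ)).sub (hm.const_mul (1 / 2 : ℝ))).sub hΨ
  rw [H.fderiv]
  simp only [ContinuousLinearMap.coe_sub', Pi.sub_apply, ContinuousLinearMap.coe_smul',
    Pi.smul_apply, ContinuousLinearMap.coe_comp', Function.comp_apply,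
    ContinuousLinearMap.prod_apply, fderivInnerCLM_apply, smul_eq_mul]
  rw [real_inner_comm (Pp w) (Pp u), real_inner_comm (Pm w) (Pm u)]
  ring

/-- If `Φ` satisfies (KS), then for every `w` the map `v ↦ Φ'(v)w` is
sequentially τ-continuous on `Φ_α^β = {α ≤ Φ ≤ β}`. -/
theorem deriv_apply_tau_seq_continuous
    [CompleteSpace X] [TopologicalSpace.SeparableSpace X]
    (Xm : Submodule ℝ X) (Pm Pp : X →L[ℝ] X) (hdec : OrthDecomp Xm Pm Pp)
    (a : ℕ → X) (ha : IsONBasisOf a Xm)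
    (Φ Ψ : X → ℝ) (hKS : IsKS Pm Pp Φ Ψ)
    (α β : ℝ) (hαβ : α ≤ β) (w : X)
    (v : ℕ → X) (l : X)
    (hv : ∀ n : ℕ, α ≤ Φ (v n) ∧ Φ (v n) ≤ β)
    (hl : α ≤ Φ l ∧ Φ l ≤ β)
    (htau : Tendsto (fun n => tauNorm Pm Pp a (v n - l)) atTop (𝓝 0)) :
    Tendsto (fun n => fderiv ℝ Φ (v n) w) atTop (𝓝 (fderiv ℝ Φ l w)) := by
  -- Lower bound on Ψ
  obtain ⟨b, hb⟩ := hKS.bddBelow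
  have hbΨ : ∀ u : X, b ≤ Ψ u := fun u => hb ⟨u, rfl⟩
  -- Bound on the τ-norms
  obtain ⟨M, hM⟩ := htau.bddAbove_range
  have hMn : ∀ n, tauNorm Pm Pp a (v n - l) ≤ M := fun n => hM ⟨n, rfl⟩
  -- Summability of the coordinate series
  have hsumm : ∀ u : X, Summable (fun j : ℕ => (1 : ℝ) / 2 ^ (j + 1) * |⟪Pm u, a j⟫|) := by
    intro u
    apply Summable.of_nonneg_of_le (f := fun j : ℕ => (1 / 2 : ℝ) ^ j * ‖Pm u‖)
    · intro j; positivity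
    · intro j
      have h1 : |⟪Pm u, a j⟫| ≤ ‖Pm u‖ := by
        have := abs_real_inner_le_norm (Pm u) (a j)
        rwa [ha.ortho.1 j, mul_one] at this
      have h2 : (1 : ℝ) / 2 ^ (j + 1) ≤ (1 / 2 : ℝ) ^ j := by
        rw [one_div, ← inv_pow, ← one_div]
        exact pow_le_pow_of_le_one (by norm_num) (by norm_num) (Nat.le_succ j)
      exact mul_le_mul h2 h1 (abs_nonneg _) (by positivity)
    · exact (summable_geometric_of_lt_one (by norm_num) (by norm_num)).mul_right _
  -- Coordinate convergence
  have hcoord : ∀ j : ℕ, Tendsto (fun n => ⟪Pm (v n) - Pm l, a j⟫) atTop (𝓝 0) := by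
    intro j
    apply squeeze_zero_norm (a := fun n => 2 ^ (j + 1) * tauNorm Pm Pp a (v n - l))
    · intro n
      have hterm : (1 : ℝ) / 2 ^ (j + 1) * |⟪Pm (v n - l), a j⟫| ≤
          tauNorm Pm Pp a (v n - l) :=
        le_trans (Summable.le_tsum (hsumm (v n - l)) j (fun j' _ => by positivity)) (le_max_left _ _)
      have hms : Pm (v n - l) = Pm (v n) - Pm l := map_sub Pm (v n) l
      rw [Real.norm_eq_abs, ← hms]
      calc |⟪Pm (v n - l), a j⟫|
          = 2 ^ (j + 1) * ((1 : ℝ) / 2 ^ (j + 1) * |⟪Pm (v n - l), a j⟫|) := by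
            field_simp
        _ ≤ 2 ^ (j + 1) * tauNorm Pm Pp a (v n - l) :=
            mul_le_mul_of_nonneg_left hterm (by positivity)
    · simpa using htau.const_mul ((2 : ℝ) ^ (j + 1))
  -- Uniform bound on ‖Pm (v n) - Pm l‖
  set R : ℝ := (‖Pp l‖ + M) ^ 2 - 2 * b - 2 * α with hR
  set C : ℝ := Real.sqrt R + ‖Pm l‖ with hC
  have hC0 : 0 ≤ C := add_nonneg (Real.sqrt_nonneg _) (norm_nonneg _)
  have hPmb : ∀ n, ‖Pm (v n) - Pm l‖ ≤ C := by
    intro n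
    have htau_nonneg : (0:ℝ) ≤ tauNorm Pm Pp a (v n - l) :=
      le_trans (norm_nonneg _) (le_max_right _ _)
    have hM0 : (0:ℝ) ≤ M := le_trans htau_nonneg (hMn n)
    have h1 : ‖Pp (v n)‖ ≤ ‖Pp l‖ + M := by
      have e1 : Pp (v n) = Pp l + (Pp (v n) - Pp l) := by abel
      have e2 : ‖Pp (v n) - Pp l‖ ≤ M := by
        rw [← map_sub]
        exact le_trans (le_max_right _ _) (hMn n)
      calc ‖Pp (v n)‖ = ‖Pp l + (Pp (v n) - Pp l)‖ := by rw [← e1]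
        _ ≤ ‖Pp l‖ + ‖Pp (v n) - Pp l‖ := norm_add_le _ _
        _ ≤ ‖Pp l‖ + M := by linarith
    have h2 : ‖Pm (v n)‖ ^ 2 ≤ R := by
      have heq := hKS.eq (v n)
      have hα := (hv n).1
      have hΨn := hbΨ (v n)
      have hp0 : (0:ℝ) ≤ ‖Pp (v n)‖ := norm_nonneg _
      have hpl0 : (0:ℝ) ≤ ‖Pp l‖ + M := add_nonneg (norm_nonneg _) hM0
      nlinarith [sq_nonneg (‖Pp l‖ + M - ‖Pp (v n)‖)]
    have hR0 : 0 ≤ R := le_trans (sq_nonneg _) h2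
    have h3 : ‖Pm (v n)‖ ≤ Real.sqrt R := (Real.le_sqrt (norm_nonneg _) hR0).2 h2
    calc ‖Pm (v n) - Pm l‖ ≤ ‖Pm (v n)‖ + ‖Pm l‖ := norm_sub_le _ _
      _ ≤ C := by rw [hC]; linarith
  -- Convergence against elements of the span of the basis
  have hspan : ∀ y ∈ Submodule.span ℝ (Set.range a),
      Tendsto (fun n => ⟪Pm (v n) - Pm l, y⟫) atTop (𝓝 0) := by
    intro y hy
    induction hy using Submodule.span_induction with
    | mem x hx => obtain ⟨j, rfl⟩ := hx; exact hcoord j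
    | zero => simpa using (tendsto_const_nhds : Tendsto (fun _ : ℕ => (0:ℝ)) atTop (𝓝 0))
    | add x y _ _ hx hy => simpa [inner_add_right] using hx.add hy
    | smul c x _ hx => simpa [real_inner_smul_right] using hx.const_mul c
  -- Convergence against all elements of Xm
  have hXm : ∀ y ∈ Xm, Tendsto (fun n => ⟪Pm (v n) - Pm l, y⟫) atTop (𝓝 0) := by
    intro y hy
    rw [Metric.tendsto_atTop]
    intro ε hε
    have hyc : y ∈ closure ((Submodule.span ℝ (Set.range a) : Submodule ℝ X) : Set X) := by
      rw [← Submodule.topologicalClosure_coe, ha.dense]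
      exact hy
    obtain ⟨z, hz, hzy⟩ := Metric.mem_closure_iff.1 hyc (ε / (2 * (C + 1))) (by positivity)
    obtain ⟨N, hN⟩ := (Metric.tendsto_atTop.1 (hspan z hz)) (ε / 2) (by positivity)
    refine ⟨N, fun n hn => ?_⟩
    have h1 := hN n hn
    rw [Real.dist_eq, sub_zero] at h1 ⊢
    have hyz : ‖y - z‖ ≤ ε / (2 * (C + 1)) := by
      rw [← dist_eq_norm]; exact le_of_lt hzy
    have key : |⟪Pm (v n) - Pm l, y⟫| ≤ |⟪Pm (v n) - Pm l, z⟫| + C * (ε / (2 * (C + 1))) := by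
      have e1 : ⟪Pm (v n) - Pm l, y⟫ = ⟪Pm (v n) - Pm l, z⟫ + ⟪Pm (v n) - Pm l, y - z⟫ := by
        rw [inner_sub_right]; ring
      have e2 : |⟪Pm (v n) - Pm l, y - z⟫| ≤ C * (ε / (2 * (C + 1))) := by
        calc |⟪Pm (v n) - Pm l, y - z⟫| ≤ ‖Pm (v n) - Pm l‖ * ‖y - z‖ :=
              abs_real_inner_le_norm _ _
          _ ≤ C * (ε / (2 * (C + 1))) :=
              mul_le_mul (hPmb n) hyz (norm_nonneg _) hC0
      calc |⟪Pm (v n) - Pm l, y⟫| ≤ |⟪Pm (v n) - Pm l, z⟫| + |⟪Pm (v n) - Pm l, y - z⟫| := by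
            rw [e1]; exact abs_add_le _ _
        _ ≤ _ := by linarith
    have hlt : C * (ε / (2 * (C + 1))) < ε / 2 := by
      have he : (C + 1) * (ε / (2 * (C + 1))) = ε / 2 := by
        field_simp
      have hδ : 0 < ε / (2 * (C + 1)) := by positivity
      nlinarith
    linarith
  -- Weak convergence of Pm (v n) against arbitrary vectors
  have hPmten : ∀ x : X, Tendsto (fun n => ⟪Pm (v n), x⟫) atTop (𝓝 ⟪Pm l, x⟫) := by
    intro x
    have h1 := hXm (Pm x) (hdec.mem_m x)
    have h2 : ∀ n, ⟪Pm (v n), x⟫ = ⟪Pm (v n) - Pm l, Pm x⟫ + ⟪Pm l, x⟫ := by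
      intro n
      rw [inner_sub_left, ← hdec.inner_Pm_Pm (v n) x, ← hdec.inner_Pm_Pm l x]
      ring
    have h3 := h1.add (tendsto_const_nhds (x := ⟪Pm l, x⟫))
    rw [zero_add] at h3
    exact h3.congr fun n => (h2 n).symm
  -- Strong convergence of Pp (v n)
  have hPpst : Tendsto (fun n => Pp (v n)) atTop (𝓝 (Pp l)) := by
    have h0 : Tendsto (fun n => Pp (v n) - Pp l) atTop (𝓝 0) := by
      apply squeeze_zero_norm (a := fun n => tauNorm Pm Pp a (v n - l))
      · intro n
        rw [← map_sub]
        exact le_max_right _ _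
      · exact htau
    have h1 := h0.add_const (Pp l)
    simpa using h1
  -- Weak convergence of v
  have hweak : WeakSeqConv v l := by
    intro x
    have h2 : ∀ n, ⟪v n, x⟫ = ⟪Pm (v n), x⟫ + ⟪Pp (v n), x⟫ := by
      intro n; rw [← inner_add_left, hdec.sum]
    have h3 : ⟪l, x⟫ = ⟪Pm l, x⟫ + ⟪Pp l, x⟫ := by
      rw [← inner_add_left, hdec.sum]
    have hp : Tendsto (fun n => ⟪Pp (v n), x⟫) atTop (𝓝 ⟪Pp l, x⟫) :=
      hPpst.inner tendsto_const_nhds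
    rw [h3]
    exact ((hPmten x).add hp).congr fun n => (h2 n).symm
  -- Assemble the three pieces
  have hfor : (fun n => fderiv ℝ Φ (v n) w) =
      fun n => ⟪Pp (v n), Pp w⟫ - ⟪Pm (v n), Pm w⟫ - fderiv ℝ Ψ (v n) w :=
    funext fun n => hKS.fderiv_apply (v n) w
  rw [hfor, hKS.fderiv_apply l w]
  have hA : Tendsto (fun n => ⟪Pp (v n), Pp w⟫) atTop (𝓝 ⟪Pp l, Pp w⟫) :=
    hPpst.inner tendsto_const_nhds
  have hB : Tendsto (fun n => ⟪Pm (v n), Pm w⟫) atTop (𝓝 ⟪Pm l, Pm w⟫) := by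
    have h1 := hPmten w
    have h2 : ∀ u : X, ⟪Pm u, w⟫ = ⟪Pm u, Pm w⟫ := fun u => hdec.inner_Pm_Pm u w
    rw [← h2 l]
    exact h1.congr fun n => h2 (v n)
  exact (hA.sub hB).sub (hKS.deriv_wsc v l hweak w)
end
end

section
/- Let f : ℝ → ℝ be continuous with f(u) = o(u) as u → 0, and suppose the map u ↦ f(u)/|u| is monotone increasing on (−∞, 0) and monotone increasing on (0, +∞). Set F(u) := ∫₀^u f(t) dt. Then for all u, v ∈ ℝ and all s ≥ −1: f(u)·[ s(s/2 + 1)u + (1 + s)v ] + F(u) − F((1 + s)u + v) ≤ 0. -/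
open Filter Topology MeasureTheory

/-- If `f : ℝ → ℝ` is continuous, `f(u) = o(u)` as `u → 0`, and `u ↦ f(u)/|u|`
is monotone increasing on `(−∞, 0)` and on `(0, +∞)`, then with
`F(u) = ∫₀ᵘ f`, for all `u, v` and all `s ≥ −1`:
`f(u)·(s(s/2 + 1)u + (1 + s)v) + F(u) − F((1 + s)u + v) ≤ 0`. -/
theorem liu_type_inequality (f : ℝ → ℝ) (hf : Continuous f)
    (hsmall : Tendsto (fun u => f u / u) (𝓝[≠] (0 : ℝ)) (𝓝 0))
    (hmono_neg : MonotoneOn (fun u => f u / |u|) (Set.Iio (0 : ℝ)))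
    (hmono_pos : MonotoneOn (fun u => f u / |u|) (Set.Ioi (0 : ℝ)))
    (F : ℝ → ℝ) (hF : ∀ u : ℝ, F u = ∫ t in (0 : ℝ)..u, f t) :
    ∀ (u v s : ℝ), -1 ≤ s →
      f u * (s * (s / 2 + 1) * u + (1 + s) * v) + F u - F ((1 + s) * u + v) ≤ 0 := by
  have hint : ∀ a b : ℝ, IntervalIntegrable f volume a b :=
    fun a b => hf.intervalIntegrable a b
  -- f 0 = 0
  have hf0 : f 0 = 0 := by
    have h1 : Tendsto f (𝓝[≠] (0:ℝ)) (𝓝 (f 0)) :=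
      (hf.tendsto 0).mono_left nhdsWithin_le_nhds
    have h2 : Tendsto (fun u : ℝ => f u / u * u) (𝓝[≠] (0:ℝ)) (𝓝 0) := by
      have := hsmall.mul (tendsto_id.mono_left (nhdsWithin_le_nhds :
        𝓝[≠] (0:ℝ) ≤ 𝓝 0))
      simpa using this
    have h3 : Tendsto f (𝓝[≠] (0:ℝ)) (𝓝 0) := by
      apply Tendsto.congr' _ h2
      filter_upwards [self_mem_nhdsWithin] with x hx
      exact div_mul_cancel₀ (f x) hx
    exact tendsto_nhds_unique h1 h3
  -- f t / |t| ≥ 0 for t > 0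
  have hgpos : ∀ t : ℝ, 0 < t → 0 ≤ f t / |t| := by
    intro t ht
    have hlim : Tendsto (fun s : ℝ => f s / |s|) (𝓝[>] (0:ℝ)) (𝓝 0) := by
      have h := hsmall.mono_left (nhdsWithin_mono _
        (fun x hx => ne_of_gt hx : Set.Ioi (0:ℝ) ⊆ {(0:ℝ)}ᶜ))
      refine h.congr' ?_
      filter_upwards [self_mem_nhdsWithin] with s hs
      rw [abs_of_pos hs]
    have hev : ∀ᶠ s in 𝓝[>] (0:ℝ), f s / |s| ≤ f t / |t| := by
      filter_upwards [Ioo_mem_nhdsGT_of_mem (Set.mem_Ico.mpr ⟨le_refl (0:ℝ), ht⟩)]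
        with s hs
      exact hmono_pos hs.1 ht hs.2.le
    exact le_of_tendsto hlim hev
  -- f t / |t| ≤ 0 for t < 0
  have hgneg : ∀ t : ℝ, t < 0 → f t / |t| ≤ 0 := by
    intro t ht
    have hlim : Tendsto (fun s : ℝ => f s / |s|) (𝓝[<] (0:ℝ)) (𝓝 0) := by
      have h := hsmall.mono_left (nhdsWithin_mono _
        (fun x hx => ne_of_lt hx : Set.Iio (0:ℝ) ⊆ {(0:ℝ)}ᶜ))
      have h' := h.neg
      rw [neg_zero] at h'
      refine h'.congr' ?_
      filter_upwards [self_mem_nhdsWithin] with s hs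
      rw [abs_of_neg hs]
      ring
    have hev : ∀ᶠ s in 𝓝[<] (0:ℝ), f t / |t| ≤ f s / |s| := by
      filter_upwards [Ioo_mem_nhdsLT_of_mem (Set.mem_Ioc.mpr ⟨ht, le_refl (0:ℝ)⟩)]
        with s hs
      exact hmono_neg ht hs.2 hs.1.le
    exact ge_of_tendsto hlim hev
  -- sign of f
  have hfpos : ∀ t : ℝ, 0 ≤ t → 0 ≤ f t := by
    intro t ht
    rcases ht.lt_or_eq with h | h
    · have := hgpos t h
      rw [abs_of_pos h] at this
      have := (le_div_iff₀ h).mp this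
      linarith
    · rw [← h, hf0]
  have hfneg : ∀ t : ℝ, t ≤ 0 → f t ≤ 0 := by
    intro t ht
    rcases ht.lt_or_eq with h | h
    · have := hgneg t h
      rw [abs_of_neg h] at this
      have := (div_nonpos_iff).mp this
      rcases this with ⟨h1, h2⟩ | ⟨h1, h2⟩
      · linarith
      · exact h1
    · rw [h, hf0]
  -- f x / x ≥ 0 always
  have hc : ∀ x : ℝ, 0 ≤ f x / x := by
    intro x
    rcases lt_trichotomy x 0 with h | h | h
    · have := div_nonneg (neg_nonneg.mpr (hfneg x h.le)) (neg_nonneg.mpr h.le)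
      rwa [neg_div_neg_eq] at this
    · simp [h]
    · exact div_nonneg (hfpos x h.le) h.le
  -- F is nonnegative
  have hFnn : ∀ x : ℝ, 0 ≤ F x := by
    intro x
    rw [hF x]
    rcases le_or_gt 0 x with h | h
    · exact intervalIntegral.integral_nonneg h (fun t ht => hfpos t ht.1)
    · rw [intervalIntegral.integral_symm]
      have : ∫ t in x..(0:ℝ), f t ≤ ∫ t in x..(0:ℝ), (0:ℝ) := by
        apply intervalIntegral.integral_mono_on h.le (hint x 0)
          (intervalIntegrable_const)
        intro t ht
        exact hfneg t ht.2
      simp at this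
      linarith
  -- comparison lemmas
  have hcomp_pos_le : ∀ u : ℝ, 0 < u → ∀ t ∈ Set.Icc (0:ℝ) u, f t ≤ f u / u * t := by
    intro u hu t ht
    rcases ht.1.lt_or_eq with h | h
    · have this : f t / |t| ≤ f u / |u| := hmono_pos (Set.mem_Ioi.mpr h) (Set.mem_Ioi.mpr hu) ht.2
      rw [abs_of_pos h, abs_of_pos hu] at this
      calc f t = f t / t * t := by field_simp
        _ ≤ f u / u * t := by exact mul_le_mul_of_nonneg_right this h.le
    · rw [← h, hf0]; simp
  have hcomp_pos_ge : ∀ u : ℝ, 0 < u → ∀ t : ℝ, u ≤ t → f u / u * t ≤ f t := by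
    intro u hu t ht
    have htp : 0 < t := lt_of_lt_of_le hu ht
    have this : f u / |u| ≤ f t / |t| := hmono_pos (Set.mem_Ioi.mpr hu) (Set.mem_Ioi.mpr htp) ht
    rw [abs_of_pos hu, abs_of_pos htp] at this
    calc f u / u * t ≤ f t / t * t := mul_le_mul_of_nonneg_right this htp.le
      _ = f t := by field_simp
  have hcomp_neg_ge : ∀ u : ℝ, u < 0 → ∀ t ∈ Set.Icc u (0:ℝ), f u / u * t ≤ f t := by
    intro u hu t ht
    rcases ht.2.lt_or_eq with h | h
    · have this : f u / |u| ≤ f t / |t| := hmono_neg (Set.mem_Iio.mpr hu) (Set.mem_Iio.mpr h) ht.1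
      rw [abs_of_neg hu, abs_of_neg h] at this
      -- f u / (-u) ≤ f t / (-t), i.e. f t / t ≤ f u / u
      have h2 : f t / t ≤ f u / u := by
        rw [div_neg_eq_neg_div, div_neg_eq_neg_div] at this
        linarith
      calc f u / u * t ≤ f t / t * t := by
            nlinarith [mul_le_mul_of_nonneg_right h2 (neg_nonneg.mpr ht.2)]
        _ = f t := div_mul_cancel₀ (f t) (ne_of_lt h)
    · rw [h, hf0]; simp
  have hcomp_neg_le : ∀ u : ℝ, u < 0 → ∀ t : ℝ, t ≤ u → f t ≤ f u / u * t := by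
    intro u hu t ht
    have htn : t < 0 := lt_of_le_of_lt ht hu
    have this : f t / |t| ≤ f u / |u| := hmono_neg (Set.mem_Iio.mpr htn) (Set.mem_Iio.mpr hu) ht
    rw [abs_of_neg hu, abs_of_neg htn] at this
    have h2 : f u / u ≤ f t / t := by
      rw [div_neg_eq_neg_div, div_neg_eq_neg_div] at this
      linarith
    calc f t = f t / t * t := (div_mul_cancel₀ (f t) (ne_of_lt htn)).symm
      _ ≤ f u / u * t := by
          nlinarith [mul_le_mul_of_nonneg_right h2 (neg_nonneg.mpr htn.le)]
  -- integral of c * t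
  have hci : ∀ (c a b : ℝ), ∫ t in a..b, c * t = c * (b^2 - a^2) / 2 := by
    intro c a b
    rw [intervalIntegral.integral_const_mul, integral_id]
    ring
  have hlin_int : ∀ (c a b : ℝ), IntervalIntegrable (fun t => c * t) volume a b :=
    fun c a b => (continuous_const.mul continuous_id).intervalIntegrable a b
  -- F u ≤ (f u / u) * u^2 / 2 for all u
  have hFu_le : ∀ u : ℝ, F u ≤ f u / u * u^2 / 2 := by
    intro u
    rcases lt_trichotomy u 0 with hu | hu | hu
    · rw [hF u, intervalIntegral.integral_symm]
      have : ∫ t in u..(0:ℝ), (f u / u) * t ≤ ∫ t in u..(0:ℝ), f t := by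
        apply intervalIntegral.integral_mono_on hu.le (hlin_int _ _ _) (hint u 0)
        intro t ht
        exact hcomp_neg_ge u hu t ht
      rw [hci] at this
      have hcu := hc u
      nlinarith
    · subst hu
      rw [hF 0, intervalIntegral.integral_same]
      simp
    · rw [hF u]
      have : ∫ t in (0:ℝ)..u, f t ≤ ∫ t in (0:ℝ)..u, (f u / u) * t := by
        apply intervalIntegral.integral_mono_on hu.le (hint 0 u) (hlin_int _ _ _)
        intro t ht
        exact hcomp_pos_le u hu t ht
      rw [hci] at this
      nlinarith
  -- Key same-sign lemma: if 0 ≤ u*w then F w - F u ≥ (f u / u) * (w^2 - u^2)/2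
  have hkeyA : ∀ u w : ℝ, u ≠ 0 → 0 ≤ u * w →
      f u / u * (w^2 - u^2) / 2 ≤ F w - F u := by
    intro u w hu huw
    have hFsub : F w - F u = ∫ t in u..w, f t := by
      rw [hF w, hF u]
      exact intervalIntegral.integral_interval_sub_left (hint 0 w) (hint 0 u)
    rw [hFsub]
    rcases hu.lt_or_gt with hun | hup
    · -- u < 0, so w ≤ 0
      have hw : w ≤ 0 := by nlinarith
      rcases le_or_gt u w with hle | hlt
      · have : ∫ t in u..w, (f u / u) * t ≤ ∫ t in u..w, f t := by
          apply intervalIntegral.integral_mono_on hle (hlin_int _ _ _) (hint u w)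
          intro t ht
          exact hcomp_neg_ge u hun t ⟨ht.1, le_trans ht.2 hw⟩
        rw [hci] at this
        linarith
      · rw [intervalIntegral.integral_symm]
        have : ∫ t in w..u, f t ≤ ∫ t in w..u, (f u / u) * t := by
          apply intervalIntegral.integral_mono_on hlt.le (hint w u) (hlin_int _ _ _)
          intro t ht
          exact hcomp_neg_le u hun t ht.2
        rw [hci] at this
        linarith
    · -- u > 0, so w ≥ 0
      have hw : 0 ≤ w := by nlinarith
      rcases le_or_gt u w with hle | hlt
      · have : ∫ t in u..w, (f u / u) * t ≤ ∫ t in u..w, f t := by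
          apply intervalIntegral.integral_mono_on hle (hlin_int _ _ _) (hint u w)
          intro t ht
          exact hcomp_pos_ge u hup t ht.1
        rw [hci] at this
        linarith
      · rw [intervalIntegral.integral_symm]
        have : ∫ t in w..u, f t ≤ ∫ t in w..u, (f u / u) * t := by
          apply intervalIntegral.integral_mono_on hlt.le (hint w u) (hlin_int _ _ _)
          intro t ht
          exact hcomp_pos_le u hup t ⟨le_trans hw ht.1, ht.2⟩
        rw [hci] at this
        linarith
  -- main proof
  intro u v s hs
  have ha : (0:ℝ) ≤ 1 + s := by linarith
  rcases eq_or_ne u 0 with hu | hu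
  · subst hu
    rw [hf0, hF 0, intervalIntegral.integral_same]
    have := hFnn ((1 + s) * 0 + v)
    linarith
  · obtain ⟨c, hcdef⟩ : ∃ c : ℝ, c = f u / u := ⟨_, rfl⟩
    obtain ⟨w, hwdef⟩ : ∃ w : ℝ, w = (1 + s) * u + v := ⟨_, rfl⟩
    rw [← hwdef]
    have hcn : 0 ≤ c := hcdef ▸ hc u
    have hfu : f u = c * u := by rw [hcdef]; exact (div_mul_cancel₀ (f u) hu).symm
    -- goal identity
    have hgoal_eq : f u * (s * (s / 2 + 1) * u + (1 + s) * v)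
        = c * (w^2 - u^2) / 2 - c * ((1 + s) * u - w)^2 / 2 := by
      rw [hfu, hwdef]; ring
    have hkey : c * (w^2 - u^2) / 2 - c * ((1 + s) * u - w)^2 / 2 ≤ F w - F u := by
      rcases le_or_gt 0 (u * w) with huw | huw
      · have hA := hkeyA u w hu huw
        rw [← hcdef] at hA
        have h2 : 0 ≤ c * ((1 + s) * u - w)^2 := mul_nonneg hcn (sq_nonneg _)
        linarith
      · have h1 : F w - F u ≥ -(c * u^2 / 2) := by
          have h0 := hFnn w
          have h0' := hFu_le u
          rw [← hcdef] at h0'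
          linarith
        have h2 : c * (1 + s) * (u * w) ≤ 0 :=
          mul_nonpos_of_nonneg_of_nonpos (mul_nonneg hcn ha) huw.le
        have h3 : 0 ≤ c * ((1 + s) * u)^2 := mul_nonneg hcn (sq_nonneg _)
        have hid : c * (w^2 - u^2) / 2 - c * ((1 + s) * u - w)^2 / 2
            = -(c * u^2 / 2) + c * (1 + s) * (u * w) - c * ((1 + s) * u)^2 / 2 := by
          ring
        linarith
    linarith [hgoal_eq, hkey]
end

section
/- Let d ≥ 1 be an integer and let σ > 1, a₂ > 0, R > 0. Suppose H : ℝ^d → ℝ is differentiable, H(z) ≥ 0 for all z ∈ ℝ^d, and |∇H(z)|^σ ≤ a₂·( (1/2)⟨∇H(z), z⟩ − H(z) )·|z|^σ for all z with |z| ≥ R. Then |∇H(z)| ≤ (a₂/2)^{1/(σ−1)} |z|^{(σ+1)/(σ−1)} for all z with |z| ≥ R. -/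
open RealInnerProductSpace

/-- If `H : ℝ^d → ℝ` is differentiable, nonnegative, and satisfies
`|∇H(z)|^σ ≤ a₂·(½⟨∇H(z), z⟩ − H(z))·|z|^σ` for `|z| ≥ R`, then
`|∇H(z)| ≤ (a₂/2)^{1/(σ−1)} |z|^{(σ+1)/(σ−1)}` for `|z| ≥ R`. -/
theorem gradient_growth_estimate (d : ℕ) (hd : 1 ≤ d) (σ a₂ R : ℝ)
    (hσ : 1 < σ) (ha₂ : 0 < a₂) (hR : 0 < R)
    (H : EuclideanSpace ℝ (Fin d) → ℝ) (hdiff : Differentiable ℝ H)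
    (hpos : ∀ z : EuclideanSpace ℝ (Fin d), 0 ≤ H z)
    (hineq : ∀ z : EuclideanSpace ℝ (Fin d), R ≤ ‖z‖ →
      ‖gradient H z‖ ^ σ ≤ a₂ * (1 / 2 * ⟪gradient H z, z⟫ - H z) * ‖z‖ ^ σ) :
    ∀ z : EuclideanSpace ℝ (Fin d), R ≤ ‖z‖ →
      ‖gradient H z‖ ≤ (a₂ / 2) ^ (1 / (σ - 1)) * ‖z‖ ^ ((σ + 1) / (σ - 1)) := by
  intro z hz
  set g := ‖gradient H z‖ with hgdef
  have hg : 0 ≤ g := norm_nonneg _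
  have hzpos : 0 < ‖z‖ := lt_of_lt_of_le hR hz
  have hσ1 : 0 < σ - 1 := by linarith
  have h1 := hineq z hz
  have hinner : ⟪gradient H z, z⟫ ≤ g * ‖z‖ := real_inner_le_norm _ _
  have hmid : 1 / 2 * ⟪gradient H z, z⟫ - H z ≤ 1 / 2 * (g * ‖z‖) := by
    have := hpos z; linarith
  have h2 : g ^ σ ≤ a₂ / 2 * g * ‖z‖ ^ (σ + 1) := by
    have hrs : 0 < ‖z‖ ^ σ := Real.rpow_pos_of_pos hzpos σ
    have : a₂ * (1 / 2 * ⟪gradient H z, z⟫ - H z) * ‖z‖ ^ σ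
        ≤ a₂ * (1 / 2 * (g * ‖z‖)) * ‖z‖ ^ σ := by
      apply mul_le_mul_of_nonneg_right _ hrs.le
      exact mul_le_mul_of_nonneg_left hmid ha₂.le
    have hpow : ‖z‖ ^ (σ + 1) = ‖z‖ ^ σ * ‖z‖ := Real.rpow_add_one hzpos.ne' σ
    calc g ^ σ ≤ a₂ * (1 / 2 * (g * ‖z‖)) * ‖z‖ ^ σ := le_trans h1 this
      _ = a₂ / 2 * g * ‖z‖ ^ (σ + 1) := by rw [hpow]; ring
  rcases eq_or_lt_of_le hg with hg0 | hg0
  · rw [← hg0]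
    positivity
  · have h3 : g ^ (σ - 1) ≤ a₂ / 2 * ‖z‖ ^ (σ + 1) := by
      have hgs : g ^ σ = g ^ (σ - 1) * g := by
        rw [← Real.rpow_add_one hg0.ne' (σ - 1)]; ring_nf
      rw [hgs] at h2
      have := (mul_le_mul_iff_of_pos_right hg0).mp (by linarith [h2] : g ^ (σ - 1) * g ≤ a₂ / 2 * ‖z‖ ^ (σ + 1) * g)
      linarith
    have h4 := Real.rpow_le_rpow (Real.rpow_nonneg hg (σ - 1)) h3 (by positivity : (0:ℝ) ≤ 1 / (σ - 1))
    rwa [← Real.rpow_mul hg,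
      mul_one_div, div_self hσ1.ne', Real.rpow_one,
      Real.mul_rpow (by positivity) (by positivity),
      ← Real.rpow_mul hzpos.le, mul_one_div] at h4
end
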